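/- For every i ≥ 0, consider the pair of genomes forming a single odd path with i adjacencies in each genome: on extremities x_1, …, x_{2i+1}, take Π1 = {{x_{2j-1}, x_{2j}} : 1 ≤ j ≤ i} and Π2 = {{x_{2j}, x_{2j+1}} : 1 ≤ j ≤ i}. Then the number of most parsimonious SCJ scenarios from G1 to G2 equals A_{2i}, the number of alternating permutations of size 2i. -/

import Mathlib

/-- A genome on an extremity type `V`: a finite set of adjacencies (unordered pairs of
distinct extremities) that are pairwise disjoint (a partial matching). -/
structure Genome (V : Type*) where
  adj : Finset (Sym2 V)
  not_isDiag : ∀ p ∈ adj, ¬ p.IsDiag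
  disj : ∀ p ∈ adj, ∀ q ∈ adj, p ≠ q → ∀ x, x ∈ p → x ∉ q

instance {V : Type*} : Inhabited (Genome V) :=
  ⟨⟨∅, by simp, by simp⟩⟩

variable {V : Type*} [DecidableEq V]

/-- The step from `G` to `G'` is a cut removing the adjacency `p`. -/
def CutsAdj (G G' : Genome V) (p : Sym2 V) : Prop :=
  p ∈ G.adj ∧ G'.adj = G.adj.erase p

/-- The step from `G` to `G'` is a join adding the adjacency `p`
(validity of `G'` forces `p` to be a pair of distinct, currently unmatched extremities). -/
def JoinsAdj (G G' : Genome V) (p : Sym2 V) : Prop :=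
  p ∉ G.adj ∧ G'.adj = insert p G.adj

/-- A single SCJ operation. -/
def SCJStep (G G' : Genome V) : Prop :=
  ∃ p, CutsAdj G G' p ∨ JoinsAdj G G' p

/-- An SCJ scenario from `G1` to `G2`: a finite sequence of genomes starting at `G1`,
ending at `G2`, consecutive ones differing by a single SCJ operation.  A scenario
represented by a list `L` has `L.length - 1` operations. -/
def IsScenario (G1 G2 : Genome V) (L : List (Genome V)) : Prop :=
  L.head? = some G1 ∧ L.getLast? = some G2 ∧ L.Chain' SCJStep

/-- The SCJ distance: the minimum number of operations in a scenario from `G1` to `G2`. -/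
noncomputable def dSCJ (G1 G2 : Genome V) : ℕ :=
  sInf {n | ∃ L, IsScenario G1 G2 L ∧ L.length = n + 1}

/-- A most parsimonious SCJ scenario. -/
def IsMPS (G1 G2 : Genome V) (L : List (Genome V)) : Prop :=
  IsScenario G1 G2 L ∧ L.length = dSCJ G1 G2 + 1

/-- The number of most parsimonious SCJ scenarios from `G1` to `G2`. -/
noncomputable def NumMPS (G1 G2 : Genome V) : ℕ :=
  {L | IsMPS G1 G2 L}.ncard

/-- The `i`-th step of the scenario `L` (steps indexed from `0`) cuts adjacency `p`. -/
def StepCut (L : List (Genome V)) (i : ℕ) (p : Sym2 V) : Prop :=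
  i + 1 < L.length ∧ CutsAdj (L.getD i default) (L.getD (i + 1) default) p

/-- The `i`-th step of the scenario `L` (steps indexed from `0`) joins adjacency `p`. -/
def StepJoin (L : List (Genome V)) (i : ℕ) (p : Sym2 V) : Prop :=
  i + 1 < L.length ∧ JoinsAdj (L.getD i default) (L.getD (i + 1) default) p

/-- `c` is an alternating (up-down) permutation:
`c 0 < c 1 > c 2 < c 3 > …` (i.e. in 1-based notation `c₁ < c₂ > c₃ < …`). -/
def IsAltPerm {n : ℕ} (c : Equiv.Perm (Fin n)) : Prop :=
  ∀ i : ℕ, ∀ h : i + 1 < n,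
    if i % 2 = 0 then c ⟨i, by omega⟩ < c ⟨i + 1, h⟩
    else c ⟨i + 1, h⟩ < c ⟨i, by omega⟩

/-- `A n`, the number of alternating permutations of size `n` (with `A 0 = 1`). -/
noncomputable def altPermCount (n : ℕ) : ℕ :=
  Nat.card {c : Equiv.Perm (Fin n) // IsAltPerm c}

/-!
Each SCJ operation changes the symmetric difference with the target by at most one adjacency,
so a scenario of length `#(Π1 ∆ Π2)` is a sequence of toggles that cuts or joins every adjacency
of `Π1 ∆ Π2` exactly once. For the path this is a permutation `σ` of its `2i` edges, `σ p` being
the step at which edge `p` is toggled. The intermediate adjacency sets are matchings exactly when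
no two consecutive edges are present at once, i.e. when every edge of `Π1` is cut before its
neighbours in `Π2` are joined; this is precisely the statement that `σ` is alternating.
-/

open Finset Function
open scoped symmDiff

theorem Genome.ext {α : Type*} {G G' : Genome α} (h : G.adj = G'.adj) : G = G' := by
  cases G; cases G'; simp_all

section TogglePrefix

variable {α : Type*} [DecidableEq α] {n : ℕ}

def togglePrefix (B : Finset α) (e : Fin n → α) (t : ℕ) : Finset α :=
  B ∆ (univ.filter fun s : Fin n => (s : ℕ) < t).image e

theorem togglePrefix_zero (B : Finset α) (e : Fin n → α) : togglePrefix B e 0 = B := by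
  simp [togglePrefix]

theorem togglePrefix_of_le (B : Finset α) (e : Fin n → α) {t : ℕ} (ht : n ≤ t) :
    togglePrefix B e t = B ∆ univ.image e := by
  rw [togglePrefix, filter_true_of_mem fun s _ => by omega]

theorem filter_val_lt_succ (s : Fin n) :
    univ.filter (fun r : Fin n => (r : ℕ) < s + 1) =
      insert s (univ.filter fun r : Fin n => (r : ℕ) < s) := by
  ext r
  simp only [mem_filter, mem_univ, true_and, mem_insert, Fin.ext_iff]
  omega

theorem togglePrefix_succ {e : Fin n → α} (he : Injective e) (B : Finset α) (s : Fin n) :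
    togglePrefix B e (s + 1) = togglePrefix B e s ∆ {e s} := by
  have hdisj : Disjoint {e s} ((univ.filter fun r : Fin n => (r : ℕ) < s).image e) := by
    simp only [disjoint_singleton_left, mem_image, mem_filter, mem_univ, true_and, not_exists,
      not_and]
    exact fun r hr hrs => (he hrs ▸ hr).false
  rw [togglePrefix, togglePrefix, filter_val_lt_succ, image_insert, insert_eq,
    ← symmDiff_eq_union hdisj, symmDiff_comm {e s}, symmDiff_assoc]

theorem togglePrefix_injective {e e' : Fin n → α} (he : Injective e) (he' : Injective e')
    (B : Finset α) (h : ∀ t ≤ n, togglePrefix B e t = togglePrefix B e' t) : e = e' := by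
  funext s
  have hs : (s : ℕ) + 1 ≤ n := s.2
  have key := congrArg (togglePrefix B e s ∆ ·) (h _ hs)
  simp only [togglePrefix_succ he, togglePrefix_succ he', h s s.2.le,
    symmDiff_symmDiff_cancel_left] at key
  exact singleton_inj.1 key

theorem symmDiff_singleton_of_mem {s : Finset α} {p : α} (hp : p ∈ s) :
    s ∆ {p} = s.erase p := by
  ext x
  by_cases hx : x = p <;> simp [mem_symmDiff, hx, hp]

theorem symmDiff_singleton_of_notMem {s : Finset α} {p : α} (hp : p ∉ s) :
    s ∆ {p} = insert p s := by
  ext x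
  by_cases hx : x = p <;> simp [mem_symmDiff, hx, hp]

variable {A : ℕ → Finset α} {e : Fin n → α}

theorem symmDiff_subset_image_of_toggle (hA : ∀ s : Fin n, A (s + 1) = A s ∆ {e s}) {t : ℕ}
    (ht : t ≤ n) : A 0 ∆ A t ⊆ (univ.filter fun s : Fin n => (s : ℕ) < t).image e := by
  induction t with
  | zero => simp
  | succ t ih =>
    let s : Fin n := ⟨t, ht⟩
    calc A 0 ∆ A (t + 1) = (A 0 ∆ A s) ∆ {e s} := by rw [symmDiff_assoc, ← hA s]
      _ ⊆ (A 0 ∆ A s) ∪ {e s} := symmDiff_subset_union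
      _ ⊆ ((univ.filter fun r : Fin n => (r : ℕ) < s).image e) ∪ {e s} :=
        union_subset_union (ih (by omega)) subset_rfl
      _ = (univ.filter fun r : Fin n => (r : ℕ) < t + 1).image e := by
        rw [filter_val_lt_succ s, image_insert, insert_eq, union_comm]

theorem injective_of_toggle (hA : ∀ s : Fin n, A (s + 1) = A s ∆ {e s})
    (hcard : n ≤ #(A 0 ∆ A n)) : Injective e := by
  have hsub : A 0 ∆ A n ⊆ univ.image e := by
    simpa using symmDiff_subset_image_of_toggle hA le_rfl
  have hcard' : #(univ.image e) = #(univ : Finset (Fin n)) :=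
    le_antisymm card_image_le (by simpa using hcard.trans (card_le_card hsub))
  simpa using injOn_of_card_image_eq hcard'

theorem eq_togglePrefix_of_toggle (hA : ∀ s : Fin n, A (s + 1) = A s ∆ {e s})
    (he : Injective e) {t : ℕ} (ht : t ≤ n) : A t = togglePrefix (A 0) e t := by
  induction t with
  | zero => rw [togglePrefix_zero]
  | succ t ih =>
    let s : Fin n := ⟨t, ht⟩
    rw [show t + 1 = s + 1 from rfl, hA s, togglePrefix_succ he, ih (by omega)]

end TogglePrefix

theorem scjStep_iff {G G' : Genome V} : SCJStep G G' ↔ #(G.adj ∆ G'.adj) = 1 := by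
  constructor
  · rintro ⟨p, ⟨hp, h⟩ | ⟨hp, h⟩⟩
    · rw [h, ← symmDiff_singleton_of_mem hp, symmDiff_symmDiff_cancel_left, card_singleton]
    · rw [h, ← symmDiff_singleton_of_notMem hp, symmDiff_symmDiff_cancel_left, card_singleton]
  · intro h
    obtain ⟨p, hp⟩ := card_eq_one.1 h
    have hG' : G'.adj = G.adj ∆ {p} := by rw [← hp, symmDiff_symmDiff_cancel_left]
    by_cases hpG : p ∈ G.adj
    · exact ⟨p, Or.inl ⟨hpG, hG'.trans (symmDiff_singleton_of_mem hpG)⟩⟩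
    · exact ⟨p, Or.inr ⟨hpG, hG'.trans (symmDiff_singleton_of_notMem hpG)⟩⟩

theorem IsScenario.card_symmDiff_lt_length {G1 G2 : Genome V} {L : List (Genome V)}
    (hL : IsScenario G1 G2 L) : #(G1.adj ∆ G2.adj) < L.length := by
  induction L generalizing G1 with
  | nil => simp [IsScenario] at hL
  | cons G L ih =>
    obtain ⟨hh, hl, hc⟩ := hL
    obtain rfl : G = G1 := by simpa using hh
    cases L with
    | nil => simp_all
    | cons G' L =>
      rw [List.Chain', List.isChain_cons_cons] at hc
      have hrest : IsScenario G' G2 (G' :: L) := ⟨rfl, by simpa using hl, hc.2⟩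
      have hstep := scjStep_iff.1 hc.1
      calc #(G.adj ∆ G2.adj) ≤ #(G.adj ∆ G'.adj ∪ G'.adj ∆ G2.adj) :=
            card_le_card (symmDiff_triangle _ _ _)
        _ ≤ #(G.adj ∆ G'.adj) + #(G'.adj ∆ G2.adj) := card_union_le _ _
        _ < (G :: G' :: L).length := by
          have := ih hrest
          simp only [List.length_cons] at this ⊢
          omega

theorem dSCJ_eq_of_isScenario {G1 G2 : Genome V} {L : List (Genome V)} (hL : IsScenario G1 G2 L)
    (hlen : L.length = #(G1.adj ∆ G2.adj) + 1) : dSCJ G1 G2 = #(G1.adj ∆ G2.adj) :=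
  le_antisymm (Nat.sInf_le ⟨L, hL, hlen⟩) <| le_csInf ⟨_, L, hL, hlen⟩ fun _ ⟨_, hL', hlen'⟩ => by
    have := hL'.card_symmDiff_lt_length
    omega

theorem IsScenario.exists_togglePrefix {G1 G2 : Genome V} {L : List (Genome V)} {n : ℕ}
    (hL : IsScenario G1 G2 L) (hlen : L.length = n + 1) (hn : #(G1.adj ∆ G2.adj) = n) :
    ∃ e : Fin n → Sym2 V, Injective e ∧ univ.image e = G1.adj ∆ G2.adj ∧
      ∀ t ≤ n, (L.getD t default).adj = togglePrefix G1.adj e t := by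
  obtain ⟨hh, hl, hc⟩ := hL
  set A : ℕ → Finset (Sym2 V) := fun t => (L.getD t default).adj
  have hA0 : A 0 = G1.adj := by
    simp [A, List.getD_eq_getElem?_getD, ← List.head?_eq_getElem?, hh]
  have hAn : A n = G2.adj := by
    simp [A, List.getD_eq_getElem?_getD, List.getLast?_eq_getElem?, hlen] at hl ⊢
    simp [hl]
  have hstep : ∀ s : Fin n, #(A s ∆ A (s + 1)) = 1 := by
    intro s
    rw [List.Chain', List.isChain_iff_getElem] at hc
    have := scjStep_iff.1 (hc s (by omega))
    rwa [← List.getD_eq_getElem _ default, ← List.getD_eq_getElem _ default] at this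
  choose e he using fun s => card_eq_one.1 (hstep s)
  have hA : ∀ s : Fin n, A (s + 1) = A s ∆ {e s} := fun s => by
    rw [← he, symmDiff_symmDiff_cancel_left]
  have hinj := injective_of_toggle hA (by rw [hA0, hAn, hn])
  have hstate : ∀ t ≤ n, A t = togglePrefix G1.adj e t :=
    fun t ht => hA0 ▸ eq_togglePrefix_of_toggle hA hinj ht
  refine ⟨e, hinj, ?_, hstate⟩
  rw [← hAn, hstate n le_rfl, togglePrefix_of_le _ _ le_rfl, symmDiff_symmDiff_cancel_left]

def IsMatching {α : Type*} (S : Finset (Sym2 α)) : Prop :=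
  ∀ p ∈ S, ∀ q ∈ S, p ≠ q → ∀ x, x ∈ p → x ∉ q

theorem exists_perm_eq_comp_of_image_eq {ι α : Type*} [Fintype ι] [DecidableEq α] {e f : ι → α}
    (he : Injective e) (h : univ.image e = univ.image f) : ∃ τ : Equiv.Perm ι, e = f ∘ τ := by
  have hmem : ∀ s, ∃ p, f p = e s := fun s => by
    simpa [h] using mem_image_of_mem e (mem_univ s)
  choose τ hτ using hmem
  have hτinj : Injective τ := fun a b hab => he (by rw [← hτ a, ← hτ b, hab])
  exact ⟨Equiv.ofBijective τ (Finite.injective_iff_bijective.1 hτinj), funext fun s => (hτ s).symm⟩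

section Path

variable {n : ℕ}

def pathEdge (p : Fin n) : Sym2 ℕ := s(p + 1, p + 2)

theorem pathEdge_injective : Injective (pathEdge (n := n)) := fun p q h => by
  rw [pathEdge, pathEdge, Sym2.eq_iff] at h
  omega

theorem val_eq_or_adjacent_of_mem_pathEdge {p q : Fin n} {v : ℕ} (hp : v ∈ pathEdge p)
    (hq : v ∈ pathEdge q) : (p : ℕ) = q ∨ (q : ℕ) = p + 1 ∨ (p : ℕ) = q + 1 := by
  rw [pathEdge, Sym2.mem_iff] at hp hq
  omega

variable (n) in
/-- The path on the extremities `1, …, n + 1` has edges `pathEdge p = {p + 1, p + 2}`;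
`pathEdges n 0` (even `p`) is `Π1` and `pathEdges n 1` (odd `p`) is `Π2`. -/
def pathEdges (r : ℕ) : Finset (Sym2 ℕ) :=
  (univ.filter fun p : Fin n => (p : ℕ) % 2 = r).image pathEdge

theorem pathEdges_zero_symmDiff_one :
    pathEdges n 0 ∆ pathEdges n 1 = univ.image (pathEdge (n := n)) := by
  rw [pathEdges, pathEdges, ← image_symmDiff _ _ pathEdge_injective]
  congr 1
  ext p
  simp only [mem_symmDiff, mem_filter, mem_univ, true_and, iff_true]
  omega

/-- The edge `p` is cut or joined at step `σ p`. -/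
def pathState (σ : Equiv.Perm (Fin n)) (t : ℕ) : Finset (Sym2 ℕ) :=
  togglePrefix (pathEdges n 0) (pathEdge ∘ σ.symm) t

variable {σ : Equiv.Perm (Fin n)}

theorem pathEdge_mem_pathState {p : Fin n} {t : ℕ} :
    pathEdge p ∈ pathState σ t ↔ ((p : ℕ) % 2 = 0 ↔ t ≤ σ p) := by
  simp only [pathState, togglePrefix, pathEdges, mem_symmDiff, mem_image, mem_filter, mem_univ,
    true_and, pathEdge_injective.eq_iff, comp_apply, Equiv.symm_apply_eq, exists_eq_right]
  omega

theorem exists_pathEdge_eq_of_mem_pathState {t : ℕ} {x : Sym2 ℕ} (hx : x ∈ pathState σ t) :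
    ∃ p : Fin n, pathEdge p = x := by
  simp only [pathState, togglePrefix, pathEdges, mem_symmDiff, mem_image, comp_apply] at hx
  rcases hx with ⟨⟨p, -, hp⟩, -⟩ | ⟨⟨r, -, hr⟩, -⟩
  exacts [⟨p, hp⟩, ⟨_, hr⟩]

theorem pathState_zero : pathState σ 0 = pathEdges n 0 := togglePrefix_zero _ _

theorem pathState_of_le {t : ℕ} (ht : n ≤ t) : pathState σ t = pathEdges n 1 := by
  rw [pathState, togglePrefix_of_le _ _ ht, ← image_image, image_univ_equiv,
    ← pathEdges_zero_symmDiff_one, symmDiff_symmDiff_cancel_left]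

theorem pathState_succ (s : Fin n) :
    pathState σ (s + 1) = pathState σ s ∆ {pathEdge (σ.symm s)} :=
  togglePrefix_succ (pathEdge_injective.comp σ.symm.injective) _ s

theorem isAltPerm_iff_adjacent : IsAltPerm σ ↔
    ∀ p q : Fin n, (q : ℕ) = p + 1 → if (p : ℕ) % 2 = 0 then σ p < σ q else σ q < σ p := by
  constructor
  · intro hσ p q hpq
    have hlt : (p : ℕ) + 1 < n := hpq ▸ q.2
    rw [show q = ⟨p + 1, hlt⟩ from Fin.ext hpq]
    exact hσ p hlt
  · exact fun h k hk => h ⟨k, by omega⟩ ⟨k + 1, hk⟩ rfl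

/-- Consecutive edges of the path share an extremity, so they are never present together: the
edge of `Π1` must be cut before its neighbour in `Π2` is joined, which is the alternation. -/
theorem isAltPerm_iff_isMatching_pathState : IsAltPerm σ ↔ ∀ t, IsMatching (pathState σ t) := by
  rw [isAltPerm_iff_adjacent]
  constructor
  · intro hσ t x hx y hy hxy v hvx hvy
    obtain ⟨p, rfl⟩ := exists_pathEdge_eq_of_mem_pathState hx
    obtain ⟨q, rfl⟩ := exists_pathEdge_eq_of_mem_pathState hy
    rw [pathEdge_mem_pathState] at hx hy
    have hpq : (p : ℕ) ≠ q := fun h => hxy (congrArg pathEdge (Fin.ext h))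
    rcases val_eq_or_adjacent_of_mem_pathEdge hvx hvy with h | h | h
    · exact hpq h
    · have := hσ p q h
      split_ifs at this <;> rw [Fin.lt_def] at this <;> omega
    · have := hσ q p h
      split_ifs at this <;> rw [Fin.lt_def] at this <;> omega
  · intro h p q hpq
    by_contra hne
    rw [apply_ite (¬ ·), Fin.not_lt, Fin.not_lt, Fin.le_def, Fin.le_def] at hne
    have hσpq : (σ p : ℕ) ≠ σ q := fun h => by
      rw [Fin.val_inj, σ.injective.eq_iff] at h
      omega
    obtain ⟨t, hp, hq⟩ : ∃ t, pathEdge p ∈ pathState σ t ∧ pathEdge q ∈ pathState σ t := by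
      simp only [pathEdge_mem_pathState]
      split_ifs at hne
      exacts [⟨σ p, by omega, by omega⟩, ⟨σ q, by omega, by omega⟩]
    refine h _ _ hp _ hq ?_ (p + 2) ?_ ?_
    · exact pathEdge_injective.ne fun h => by rw [h] at hpq; omega
    · simp [pathEdge]
    · simp [pathEdge, hpq]

def pathGenome (σ : Equiv.Perm (Fin n)) (hσ : IsAltPerm σ) (t : ℕ) : Genome ℕ where
  adj := pathState σ t
  not_isDiag x hx := by
    obtain ⟨p, rfl⟩ := exists_pathEdge_eq_of_mem_pathState hx
    simp [pathEdge]
  disj := isAltPerm_iff_isMatching_pathState.1 hσ t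

def pathScenario (σ : Equiv.Perm (Fin n)) (hσ : IsAltPerm σ) : List (Genome ℕ) :=
  (List.range (n + 1)).map (pathGenome σ hσ)

theorem length_pathScenario (hσ : IsAltPerm σ) : (pathScenario σ hσ).length = n + 1 := by
  simp [pathScenario]

theorem getD_pathScenario (hσ : IsAltPerm σ) {t : ℕ} (ht : t ≤ n) :
    (pathScenario σ hσ).getD t default = pathGenome σ hσ t := by
  rw [List.getD_eq_getElem _ _ (by simp [pathScenario]; omega)]
  simp [pathScenario]

theorem isScenario_pathScenario {G1 G2 : Genome ℕ} (h1 : G1.adj = pathEdges n 0)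
    (h2 : G2.adj = pathEdges n 1) (hσ : IsAltPerm σ) :
    IsScenario G1 G2 (pathScenario σ hσ) := by
  refine ⟨?_, ?_, ?_⟩
  · rw [pathScenario, List.range_succ_eq_map]
    simpa using Genome.ext (by rw [h1]; exact pathState_zero)
  · rw [pathScenario, List.range_succ, List.map_append]
    simpa using Genome.ext (by rw [h2]; exact pathState_of_le le_rfl)
  · rw [pathScenario, List.Chain', List.isChain_map, List.isChain_range_succ]
    intro t ht
    let s : Fin n := ⟨t, ht⟩
    rw [scjStep_iff]
    change #(pathState σ s ∆ pathState σ (s + 1)) = 1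
    rw [pathState_succ, symmDiff_symmDiff_cancel_left, card_singleton]

variable (n) in
/-- Cut all of `Π1`, then join all of `Π2`. -/
noncomputable def evensFirst : Equiv.Perm (Fin n) :=
  Equiv.ofBijective
    (fun p => ⟨if (p : ℕ) % 2 = 0 then p / 2 else (n + 1) / 2 + p / 2, by split_ifs <;> omega⟩)
    (Finite.injective_iff_bijective.1 fun p q h => by
      simp only [Fin.mk.injEq] at h
      ext
      split_ifs at h <;> omega)

theorem isAltPerm_evensFirst : IsAltPerm (evensFirst n) := by
  intro k hk
  simp only [evensFirst, Equiv.ofBijective_apply, Fin.mk_lt_mk]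
  split_ifs <;> omega

theorem card_symmDiff_pathEdges : #(pathEdges n 0 ∆ pathEdges n 1) = n := by
  rw [pathEdges_zero_symmDiff_one, card_image_of_injective _ pathEdge_injective, card_univ,
    Fintype.card_fin]

theorem dSCJ_eq_of_pathEdges {G1 G2 : Genome ℕ} (h1 : G1.adj = pathEdges n 0)
    (h2 : G2.adj = pathEdges n 1) : dSCJ G1 G2 = n := by
  have hcard : #(G1.adj ∆ G2.adj) = n := by rw [h1, h2, card_symmDiff_pathEdges]
  rw [← hcard]
  exact dSCJ_eq_of_isScenario (isScenario_pathScenario h1 h2 isAltPerm_evensFirst)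
    (by rw [length_pathScenario, hcard])

theorem IsMPS.exists_eq_pathScenario {G1 G2 : Genome ℕ} {L : List (Genome ℕ)}
    (hL : IsMPS G1 G2 L) (h1 : G1.adj = pathEdges n 0) (h2 : G2.adj = pathEdges n 1) :
    ∃ (σ : Equiv.Perm (Fin n)) (hσ : IsAltPerm σ), L = pathScenario σ hσ := by
  obtain ⟨hsc, hlen⟩ := hL
  rw [dSCJ_eq_of_pathEdges h1 h2] at hlen
  obtain ⟨e, he, himage, hA⟩ :=
    hsc.exists_togglePrefix hlen (by rw [h1, h2, card_symmDiff_pathEdges])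
  rw [h1, h2, pathEdges_zero_symmDiff_one] at himage
  obtain ⟨τ, rfl⟩ := exists_perm_eq_comp_of_image_eq he himage
  have hstate : ∀ t ≤ n, (L.getD t default).adj = pathState τ.symm t := fun t ht => by
    rw [hA t ht, h1, pathState, Equiv.symm_symm]
  have hσ : IsAltPerm τ.symm := isAltPerm_iff_isMatching_pathState.2 fun t => by
    rcases le_total t n with ht | ht
    · exact hstate t ht ▸ (L.getD t default).disj
    · rw [pathState_of_le ht, ← pathState_of_le le_rfl, ← hstate n le_rfl]
      exact (L.getD n default).disj
  refine ⟨τ.symm, hσ, List.ext_getElem (by rw [hlen, length_pathScenario]) fun t h _ => ?_⟩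
  rw [← List.getD_eq_getElem _ default, ← List.getD_eq_getElem _ default,
    getD_pathScenario hσ (by omega)]
  exact Genome.ext (hstate t (by omega))

theorem pathScenario_injective {σ σ' : Equiv.Perm (Fin n)} {hσ : IsAltPerm σ}
    {hσ' : IsAltPerm σ'} (h : pathScenario σ hσ = pathScenario σ' hσ') : σ = σ' := by
  have hstate : ∀ t ≤ n, pathState σ t = pathState σ' t := fun t ht => by
    have := congrArg (fun L => (L.getD t default).adj) h
    simp only [getD_pathScenario _ ht] at this
    exact this
  have hcomp : pathEdge ∘ σ.symm = pathEdge ∘ σ'.symm :=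
    togglePrefix_injective (pathEdge_injective.comp σ.symm.injective)
      (pathEdge_injective.comp σ'.symm.injective) _ hstate
  exact Equiv.symm_bijective.injective (DFunLike.coe_injective (pathEdge_injective.comp_left hcomp))

theorem numMPS_eq_altPermCount {G1 G2 : Genome ℕ} (h1 : G1.adj = pathEdges n 0)
    (h2 : G2.adj = pathEdges n 1) : NumMPS G1 G2 = altPermCount n := by
  have hrange : {L | IsMPS G1 G2 L} =
      Set.range fun σ : {σ : Equiv.Perm (Fin n) // IsAltPerm σ} => pathScenario σ.1 σ.2 := by
    ext L
    constructor
    · intro hL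
      obtain ⟨σ, hσ, rfl⟩ := hL.exists_eq_pathScenario h1 h2
      exact ⟨⟨σ, hσ⟩, rfl⟩
    · rintro ⟨⟨σ, hσ⟩, rfl⟩
      exact ⟨isScenario_pathScenario h1 h2 hσ,
        by rw [length_pathScenario, dSCJ_eq_of_pathEdges h1 h2]⟩
  rw [NumMPS, hrange,
    Set.ncard_range_of_injective fun _ _ h => Subtype.ext (pathScenario_injective h)]
  rfl

end Path

theorem image_Icc_eq_pathEdges_zero (i : ℕ) :
    (Icc 1 i).image (fun j => s(2 * j - 1, 2 * j)) = pathEdges (2 * i) 0 := by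
  ext x
  simp only [pathEdges, mem_image, mem_Icc, mem_filter, mem_univ, true_and]
  constructor
  · rintro ⟨j, hj, rfl⟩
    refine ⟨⟨2 * j - 2, by omega⟩, by simp only; omega, ?_⟩
    simp only [pathEdge, Sym2.eq_iff]
    omega
  · rintro ⟨p, hp, rfl⟩
    refine ⟨p / 2 + 1, by omega, ?_⟩
    simp only [pathEdge, Sym2.eq_iff]
    omega

theorem image_Icc_eq_pathEdges_one (i : ℕ) :
    (Icc 1 i).image (fun j => s(2 * j, 2 * j + 1)) = pathEdges (2 * i) 1 := by
  ext x
  simp only [pathEdges, mem_image, mem_Icc, mem_filter, mem_univ, true_and]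
  constructor
  · rintro ⟨j, hj, rfl⟩
    refine ⟨⟨2 * j - 1, by omega⟩, by simp only; omega, ?_⟩
    simp only [pathEdge, Sym2.eq_iff]
    omega
  · rintro ⟨p, hp, rfl⟩
    refine ⟨(p + 1) / 2, by omega, ?_⟩
    simp only [pathEdge, Sym2.eq_iff]
    omega

/-- For the pair of genomes forming a single odd path with `i ≥ 0`
adjacencies in each genome (extremities `1, …, 2i+1`, `Π1 = {{2j-1, 2j} : 1 ≤ j ≤ i}`,
`Π2 = {{2j, 2j+1} : 1 ≤ j ≤ i}`), the number of most parsimonious SCJ scenarios from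
`G1` to `G2` equals `A (2i)`, the number of alternating permutations of size `2i`. -/
theorem oddPath_count (i : ℕ) (G1 G2 : Genome ℕ)
    (h1 : G1.adj = (Finset.Icc 1 i).image fun j => s(2 * j - 1, 2 * j))
    (h2 : G2.adj = (Finset.Icc 1 i).image fun j => s(2 * j, 2 * j + 1)) :
    NumMPS G1 G2 = altPermCount (2 * i) :=
  numMPS_eq_altPermCount (h1.trans (image_Icc_eq_pathEdges_zero i))
    (h2.trans (image_Icc_eq_pathEdges_one i))
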